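/- In contrapositionally complemented lattices, negative ex falso holds: every relatively pseudo-complemented lattice with a unary operation ¬ satisfying (x → y) → (¬y → ¬x) = 1 for all x, y also satisfies (x ∧ ¬x) → ¬y = 1 for all x, y. -/
import Mathlib

/-- In any relatively pseudo-complemented lattice (generalized Heyting algebra)
with a unary operation `neg` satisfying the contraposition identity
`(x ⇨ y) ⇨ (neg y ⇨ neg x) = ⊤`, negative ex falso holds:
`(x ⊓ neg x) ⇨ neg y = ⊤` for all `x, y`. -/
theorem negative_ex_falso_of_contraposition
    {A : Type*} [GeneralizedHeytingAlgebra A] (neg : A → A)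
    (contra : ∀ x y : A, (x ⇨ y) ⇨ (neg y ⇨ neg x) = ⊤) :
    ∀ x y : A, (x ⊓ neg x) ⇨ neg y = ⊤ := by
  intro x y
  rw [himp_eq_top_iff]
  have h : (y ⇨ x) ≤ neg x ⇨ neg y := by
    rw [← himp_eq_top_iff, contra y x]
  have hx : x ≤ neg x ⇨ neg y := le_trans (le_himp_iff.mpr inf_le_left) h
  exact le_himp_iff.mp hx
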